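/- Let E, F be real Banach spaces and T : E → F' a bounded linear operator into a dual space F' = (F)'. Suppose T = g ∘ f where f : E → ℓ∞(B_{E'}) and g : ℓ∞(B_{E'}) → F' are Lipschitz maps (with f(0) = 0, g(0) = 0). Then there exist a bounded linear operator S : E → ℓ∞(B_{E'}) and a bounded linear operator R : ℓ∞(B_{E'}) → F' such that T = R ∘ S and ‖R‖·‖S‖ ≤ Lip(f)·Lip(g). -/

import Mathlib

/-!
The map `f` extends, by the Lipschitz injectivity of `ℓ^∞`, along the isometric embedding
`ι : E → ℓ^∞(B_{E'})` to a `Kf`-Lipschitz map `f̃`, so `G = g ∘ f̃` is a `Kf * Kg`-Lipschitz map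
with `G ∘ ι = T`. It remains to linearise `G` without increasing its Lipschitz constant
(Lindenstrauss–Pełczyński). Abelian groups carry invariant means (Hahn–Banach applied to Day's
sublinear functional), and because `F'` is a dual space these act coordinatewise on bounded
`F'`-valued functions. Averaging `x ↦ G (ι x + h) - G (ι x)` over `E` gives a Lipschitz `γ` with
`γ (h + ι m) = γ h + T m`; averaging `z ↦ γ (z + h) - γ z` over `ℓ^∞(B_{E'})` then gives an
additive, hence linear, map `R` with `R ∘ ι = T` and `‖R‖ ≤ Kf * Kg`, while `‖ι‖ ≤ 1`.
-/

open scoped lp ENNReal NNReal Pointwise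
open Set Function

theorem lp.abs_apply_le_norm {A : Type*} (φ : ℓ^∞(A, ℝ)) (x : A) : |φ x| ≤ ‖φ‖ :=
  lp.norm_apply_le_norm ENNReal.top_ne_zero φ x

section UpperMean

variable {A : Type*} [AddCommGroup A]

def upperAverages (φ : A → ℝ) : Set ℝ :=
  {r | ∃ n : ℕ, 0 < n ∧ ∃ a : Fin n → A, ∀ x, ∑ i, φ (x + a i) ≤ n * r}

theorem mem_upperAverages_of_forall_le {φ : A → ℝ} {C : ℝ} (h : ∀ x, φ x ≤ C) :
    C ∈ upperAverages φ :=
  ⟨1, one_pos, fun _ => 0, fun x => by simpa using h x⟩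

theorem le_of_mem_upperAverages {φ : A → ℝ} {c r : ℝ} (h : ∀ x, c ≤ φ x)
    (hr : r ∈ upperAverages φ) : c ≤ r := by
  obtain ⟨n, hn, a, ha⟩ := hr
  refine le_of_mul_le_mul_left ?_ (Nat.cast_pos.2 hn)
  calc (n : ℝ) * c = ∑ _i : Fin n, c := by simp
    _ ≤ ∑ i, φ (0 + a i) := Finset.sum_le_sum fun i _ => h _
    _ ≤ n * r := ha 0

theorem add_mem_upperAverages {φ ψ : A → ℝ} {r s : ℝ} (hr : r ∈ upperAverages φ)
    (hs : s ∈ upperAverages ψ) : r + s ∈ upperAverages (φ + ψ) := by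
  obtain ⟨n, hn, a, ha⟩ := hr
  obtain ⟨m, hm, b, hb⟩ := hs
  refine ⟨n * m, Nat.mul_pos hn hm,
    fun k => a (finProdFinEquiv.symm k).1 + b (finProdFinEquiv.symm k).2, fun x => ?_⟩
  have hφ : ∑ p : Fin n × Fin m, φ (x + (a p.1 + b p.2)) ≤ m * (n * r) := by
    rw [Fintype.sum_prod_type_right]
    calc _ ≤ ∑ _j : Fin m, n * r := Finset.sum_le_sum fun j _ =>
          (Finset.sum_congr rfl fun i _ => by rw [add_comm (a i), ← add_assoc]).trans_le
            (ha (x + b j))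
      _ = m * (n * r) := by simp
  have hψ : ∑ p : Fin n × Fin m, ψ (x + (a p.1 + b p.2)) ≤ n * (m * s) := by
    rw [Fintype.sum_prod_type]
    calc _ ≤ ∑ _i : Fin n, m * s := Finset.sum_le_sum fun i _ =>
          (Finset.sum_congr rfl fun j _ => by rw [← add_assoc]).trans_le (hb (x + a i))
      _ = n * (m * s) := by simp
  calc _ = ∑ p : Fin n × Fin m, (φ (x + (a p.1 + b p.2)) + ψ (x + (a p.1 + b p.2))) :=
        finProdFinEquiv.symm.sum_comp fun p => (φ + ψ) (x + (a p.1 + b p.2))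
    _ ≤ m * (n * r) + n * (m * s) := by rw [Finset.sum_add_distrib]; exact add_le_add hφ hψ
    _ = ↑(n * m) * (r + s) := by push_cast; ring

theorem smul_mem_upperAverages {φ : A → ℝ} {c r : ℝ} (hc : 0 ≤ c) (hr : r ∈ upperAverages φ) :
    c * r ∈ upperAverages (c • φ) := by
  obtain ⟨n, hn, a, ha⟩ := hr
  refine ⟨n, hn, a, fun x => ?_⟩
  calc ∑ i, (c • φ) (x + a i) = c * ∑ i, φ (x + a i) := by simp [Finset.mul_sum]
    _ ≤ c * (n * r) := mul_le_mul_of_nonneg_left (ha x) hc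
    _ = n * (c * r) := by ring

/-- Day's sublinear functional `inf_{(aᵢ)} sup_x avgᵢ φ (x + aᵢ)`, the infimum running over finite
families in `A`; linear functionals below it are invariant means. -/
noncomputable def upperMean (φ : ℓ^∞(A, ℝ)) : ℝ := sInf (upperAverages φ)

theorem upperAverages_nonempty (φ : ℓ^∞(A, ℝ)) : (upperAverages φ).Nonempty :=
  ⟨_, mem_upperAverages_of_forall_le fun x => le_of_abs_le (lp.abs_apply_le_norm φ x)⟩

theorem upperAverages_bddBelow (φ : ℓ^∞(A, ℝ)) : BddBelow (upperAverages φ) :=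
  ⟨-‖φ‖, fun _ => le_of_mem_upperAverages fun x => neg_le_of_abs_le (lp.abs_apply_le_norm φ x)⟩

theorem upperMean_le {φ : ℓ^∞(A, ℝ)} {C : ℝ} (h : ∀ x, φ x ≤ C) : upperMean φ ≤ C :=
  csInf_le (upperAverages_bddBelow φ) (mem_upperAverages_of_forall_le h)

theorem upperMean_add_le (φ ψ : ℓ^∞(A, ℝ)) : upperMean (φ + ψ) ≤ upperMean φ + upperMean ψ := by
  unfold upperMean
  rw [← csInf_add (upperAverages_nonempty φ) (upperAverages_bddBelow φ)
    (upperAverages_nonempty ψ) (upperAverages_bddBelow ψ)]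
  refine csInf_le_csInf (upperAverages_bddBelow _)
    ((upperAverages_nonempty φ).add (upperAverages_nonempty ψ)) ?_
  rintro _ ⟨r, hr, s, hs, rfl⟩
  exact add_mem_upperAverages hr hs

theorem upperMean_smul {c : ℝ} (hc : 0 < c) (φ : ℓ^∞(A, ℝ)) :
    upperMean (c • φ) = c * upperMean φ := by
  have : upperAverages ⇑(c • φ) = c • upperAverages ⇑φ := by
    refine Subset.antisymm (fun r hr => ⟨c⁻¹ * r, ?_, ?_⟩) ?_
    · simpa [smul_smul, inv_mul_cancel₀ hc.ne'] using
        smul_mem_upperAverages (inv_nonneg.2 hc.le) hr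
    · simp [hc.ne']
    · rintro _ ⟨r, hr, rfl⟩
      exact smul_mem_upperAverages hc.le hr
  rw [upperMean, this, Real.sInf_smul_of_nonneg hc.le, smul_eq_mul]
  rfl

theorem upperMean_zero : upperMean (0 : ℓ^∞(A, ℝ)) = 0 := by
  have := upperMean_smul two_pos (0 : ℓ^∞(A, ℝ))
  rw [smul_zero] at this
  linarith

theorem upperMean_sub_le_zero {φ ψ : ℓ^∞(A, ℝ)} {m : A} (h : ∀ x, ψ x = φ (x + m)) :
    upperMean (ψ - φ) ≤ 0 := by
  have key : ∀ n : ℕ, 0 < n → upperMean (ψ - φ) ≤ 2 * ‖φ‖ / n := fun n hn => by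
    refine csInf_le (upperAverages_bddBelow _) ⟨n, hn, fun i => (i : ℕ) • m, fun x => ?_⟩
    have htel : ∑ i : Fin n, (ψ - φ) (x + (i : ℕ) • m) = φ (x + n • m) - φ (x + 0 • m) := by
      rw [Fin.sum_univ_eq_sum_range (fun i => (ψ - φ) (x + i • m)),
        ← Finset.sum_range_sub (fun i => φ (x + i • m))]
      refine Finset.sum_congr rfl fun i _ => ?_
      rw [lp.coeFn_sub, Pi.sub_apply, h, succ_nsmul, add_assoc]
    rw [htel, mul_div_cancel₀ _ (Nat.cast_pos.2 hn).ne']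
    linarith [abs_le.1 (lp.abs_apply_le_norm φ (x + n • m)),
      abs_le.1 (lp.abs_apply_le_norm φ (x + 0 • m))]
  exact ge_of_tendsto (tendsto_const_div_atTop_nhds_zero_nat _)
    (Filter.eventually_atTop.2 ⟨1, key⟩)

end UpperMean

structure IsInvariantMean {A V : Type*} [AddCommGroup A] [NormedAddCommGroup V] [NormedSpace ℝ V]
    (M : ℓ^∞(A, V) →ₗ[ℝ] V) : Prop where
  norm_map_le : ∀ u, ‖M u‖ ≤ ‖u‖
  map_const : ∀ u c, (∀ a, u a = c) → M u = c
  map_translate : ∀ u v m, (∀ a, v a = u (a + m)) → M v = M u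

theorem exists_isInvariantMean_real (A : Type*) [AddCommGroup A] :
    ∃ Λ : ℓ^∞(A, ℝ) →ₗ[ℝ] ℝ, IsInvariantMean Λ := by
  obtain ⟨Λ, -, hΛ⟩ := exists_extension_of_le_sublinear ⟨⊥, 0⟩ (upperMean (A := A))
    (fun c hc φ => upperMean_smul hc φ) upperMean_add_le (by
      rintro ⟨φ, hφ⟩
      rw [Submodule.mem_bot] at hφ
      subst hφ
      exact upperMean_zero.ge)
  have hle (φ : ℓ^∞(A, ℝ)) (C : ℝ) (h : ∀ x, φ x ≤ C) : Λ φ ≤ C := (hΛ φ).trans (upperMean_le h)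
  have hge (φ : ℓ^∞(A, ℝ)) (C : ℝ) (h : ∀ x, C ≤ φ x) : C ≤ Λ φ := by
    have := hle (-φ) (-C) fun x => neg_le_neg (h x)
    rw [map_neg] at this
    linarith
  refine ⟨Λ, fun φ => abs_le.2 ⟨hge _ _ fun x => neg_le_of_abs_le (lp.abs_apply_le_norm φ x),
    hle _ _ fun x => le_of_abs_le (lp.abs_apply_le_norm φ x)⟩,
    fun φ c h => le_antisymm (hle _ _ fun x => (h x).le) (hge _ _ fun x => (h x).ge),
    fun u v m h => ?_⟩
  have h₁ := (hΛ (v - u)).trans (upperMean_sub_le_zero h)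
  have h₂ := (hΛ (u - v)).trans (upperMean_sub_le_zero (m := -m) fun x => by
    rw [h, neg_add_cancel_right])
  rw [map_sub] at h₁ h₂
  linarith

noncomputable def lp.evalDual {A : Type*} (F : Type*) [NormedAddCommGroup F] [NormedSpace ℝ F] :
    ℓ^∞(A, StrongDual ℝ F) →ₗ[ℝ] F →ₗ[ℝ] ℓ^∞(A, ℝ) :=
  LinearMap.mk₂ ℝ (fun u y => ⟨fun a => u a y, memℓp_infty ⟨‖u‖ * ‖y‖, by
      rintro _ ⟨a, rfl⟩
      exact (u a).le_of_opNorm_le (lp.norm_apply_le_norm ENNReal.top_ne_zero u a) y⟩⟩)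
    (fun _ _ _ => rfl) (fun _ _ _ => rfl) (fun u y z => lp.ext (funext fun a => map_add (u a) y z))
    (fun c u y => lp.ext (funext fun a => map_smul (u a) c y))

theorem lp.norm_evalDual_le {A F : Type*} [NormedAddCommGroup F] [NormedSpace ℝ F]
    (u : ℓ^∞(A, StrongDual ℝ F)) (y : F) : ‖lp.evalDual F u y‖ ≤ ‖u‖ * ‖y‖ :=
  lp.norm_le_of_forall_le (by positivity) fun a =>
    (u a).le_of_opNorm_le (lp.norm_apply_le_norm ENNReal.top_ne_zero u a) y

theorem exists_isInvariantMean_strongDual (A : Type*) [AddCommGroup A] (F : Type*)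
    [NormedAddCommGroup F] [NormedSpace ℝ F] :
    ∃ M : ℓ^∞(A, StrongDual ℝ F) →ₗ[ℝ] StrongDual ℝ F, IsInvariantMean M := by
  obtain ⟨Λ, hΛ⟩ := exists_isInvariantMean_real A
  have hM (u : ℓ^∞(A, StrongDual ℝ F)) (y : F) : ‖Λ (lp.evalDual F u y)‖ ≤ 1 * ‖u‖ * ‖y‖ := by
    rw [one_mul]
    exact (hΛ.norm_map_le _).trans (lp.norm_evalDual_le u y)
  let M := ((lp.evalDual F).compr₂ Λ).mkContinuous₂ 1 hM
  refine ⟨M.toLinearMap, fun u => ?_, fun u c h => ?_, fun u v m h => ?_⟩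
  · exact (M u).opNorm_le_bound (norm_nonneg u) fun y => (hM u y).trans_eq (by rw [one_mul])
  · ext y
    exact hΛ.map_const _ _ fun a => congrArg (· y) (h a)
  · ext y
    exact hΛ.map_translate _ _ m fun a => congrArg (· y) (h a)

theorem IsInvariantMean.exists_lipschitz_average {A V : Type*} [AddCommGroup A]
    [NormedAddCommGroup V] [NormedSpace ℝ V] {M : ℓ^∞(A, V) →ₗ[ℝ] V} (hM : IsInvariantMean M)
    {X : Type*} [SeminormedAddCommGroup X] (ψ : A →+ X) {Φ : X → V} {K : ℝ≥0}
    (hΦ : LipschitzWith K Φ) :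
    ∃ Ψ : X → V, LipschitzWith K Ψ ∧ (∀ h m, Ψ (h + ψ m) = Ψ h + Ψ (ψ m)) ∧
      ∀ m v, (∀ a, Φ (ψ a + ψ m) - Φ (ψ a) = v) → Ψ (ψ m) = v := by
  let D (h z : X) : ℓ^∞(A, V) :=
    ⟨fun a => Φ (ψ a + h) - Φ (ψ a + z), memℓp_infty ⟨K * dist h z, by
      rintro _ ⟨a, rfl⟩
      simpa [← dist_eq_norm] using hΦ.dist_le_mul (ψ a + h) (ψ a + z)⟩⟩
  have hD_add (h z w : X) : D h z + D z w = D h w :=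
    lp.ext <| funext fun a => sub_add_sub_cancel _ _ _
  have hD_translate (h z : X) (m : A) : M (D (h + ψ m) (z + ψ m)) = M (D h z) :=
    hM.map_translate _ _ m fun a => by
      change Φ (ψ a + (h + ψ m)) - Φ (ψ a + (z + ψ m)) = Φ (ψ (a + m) + h) - Φ (ψ (a + m) + z)
      simp only [map_add, add_right_comm (ψ a) (ψ m), add_assoc]
  refine ⟨fun h => M (D h 0), LipschitzWith.of_dist_le_mul fun h z => ?_, fun h m => ?_,
    fun m v hv => hM.map_const _ _ fun a =>
      (congrArg (Φ (ψ a + ψ m) - Φ ·) (add_zero _)).trans (hv a)⟩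
  · rw [dist_eq_norm, ← map_sub, ← hD_add h z 0, add_sub_cancel_right]
    refine (hM.norm_map_le _).trans (lp.norm_le_of_forall_le (by positivity) fun a => ?_)
    rw [← dist_eq_norm]
    simpa using hΦ.dist_le_mul (ψ a + h) (ψ a + z)
  · show M (D (h + ψ m) 0) = M (D h 0) + M (D (ψ m) 0)
    rw [← hD_add _ (ψ m) 0, map_add, ← hD_translate h 0 m, zero_add]

theorem exists_continuousLinearMap_eq_of_lipschitzWith {E X F : Type*} [AddCommGroup E]
    [NormedAddCommGroup X] [NormedSpace ℝ X] [NormedAddCommGroup F] [NormedSpace ℝ F]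
    (ι : E →+ X) (T : E →+ StrongDual ℝ F) {G : X → StrongDual ℝ F} {K : ℝ≥0}
    (hG : LipschitzWith K G) (hGι : ∀ x, G (ι x) = T x) :
    ∃ R : X →L[ℝ] StrongDual ℝ F, (∀ x, R (ι x) = T x) ∧ ‖R‖ ≤ K := by
  obtain ⟨ME, hME⟩ := exists_isInvariantMean_strongDual E F
  obtain ⟨MX, hMX⟩ := exists_isInvariantMean_strongDual X F
  obtain ⟨γ, hγ, hγ_add, hγ_eq⟩ := hME.exists_lipschitz_average ι hG
  have hγι (m : E) : γ (ι m) = T m :=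
    hγ_eq m (T m) fun a => by rw [← map_add, hGι, hGι, map_add, add_sub_cancel_left]
  obtain ⟨β, hβ, hβ_add, hβ_eq⟩ := hMX.exists_lipschitz_average (AddMonoidHom.id X) hγ
  have hβι (m : E) : β (ι m) = T m :=
    hβ_eq (ι m) (T m) fun z => by simp [hγ_add, hγι]
  let R := (AddMonoidHom.mk' β hβ_add).toRealLinearMap hβ.continuous
  exact ⟨R, hβι, ContinuousLinearMap.opNorm_le_of_lipschitz hβ⟩

noncomputable def toLpInftyDualBall (E : Type*) [NormedAddCommGroup E] [NormedSpace ℝ E] :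
    E →ₗᵢ[ℝ] ℓ^∞(Metric.closedBall (0 : StrongDual ℝ E) 1, ℝ) where
  toFun x := ⟨fun x' => x'.1 x, memℓp_infty ⟨‖x‖, by
    rintro _ ⟨x', rfl⟩
    exact (x'.1.le_of_opNorm_le (mem_closedBall_zero_iff.1 x'.2) x).trans_eq (one_mul _)⟩⟩
  map_add' x y := lp.ext <| funext fun x' => map_add x'.1 x y
  map_smul' c x := lp.ext <| funext fun x' => map_smul x'.1 c x
  norm_map' x := by
    refine le_antisymm (lp.norm_le_of_forall_le (norm_nonneg x) fun x' =>
      (x'.1.le_of_opNorm_le (mem_closedBall_zero_iff.1 x'.2) x).trans_eq (one_mul _)) ?_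
    obtain ⟨x', hx'_norm, hx'⟩ := exists_dual_vector'' ℝ x
    refine le_of_eq_of_le ?_ (lp.norm_apply_le_norm ENNReal.top_ne_zero _
      (⟨x', mem_closedBall_zero_iff.2 hx'_norm⟩ : Metric.closedBall (0 : StrongDual ℝ E) 1))
    simp [hx']

theorem LipschitzWith.extend_lp_infty_of_isometry {α β ι : Type*} [EMetricSpace α]
    [PseudoMetricSpace β] {e : α → β} (he : Isometry e) {f : α → ℓ^∞(ι, ℝ)} {K : ℝ≥0}
    (hf : LipschitzWith K f) : ∃ g : β → ℓ^∞(ι, ℝ), LipschitzWith K g ∧ g ∘ e = f := by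
  have hext : LipschitzOnWith K (extend e f 0) (range e) := by
    rintro _ ⟨x, rfl⟩ _ ⟨y, rfl⟩
    simpa only [he.injective.extend_apply, he.edist_eq] using hf x y
  obtain ⟨g, hg, hfg⟩ := hext.extend_lp_infty
  exact ⟨g, hg, funext fun x =>
    (hfg (mem_range_self x)).symm.trans (he.injective.extend_apply _ _ x)⟩

theorem stmt10_general {E F : Type*} [NormedAddCommGroup E] [NormedSpace ℝ E]
    [NormedAddCommGroup F] [NormedSpace ℝ F]
    (T : E →L[ℝ] StrongDual ℝ F)
    (f : E → lp (fun _ : (Metric.closedBall (0 : StrongDual ℝ E) 1) => ℝ) ⊤)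
    (g : lp (fun _ : (Metric.closedBall (0 : StrongDual ℝ E) 1) => ℝ) ⊤ → StrongDual ℝ F)
    (Kf Kg : NNReal) (hf : LipschitzWith Kf f) (hg : LipschitzWith Kg g)
    (hT : ∀ x : E, T x = g (f x)) :
    ∃ (S : E →L[ℝ] lp (fun _ : (Metric.closedBall (0 : StrongDual ℝ E) 1) => ℝ) ⊤)
      (R : lp (fun _ : (Metric.closedBall (0 : StrongDual ℝ E) 1) => ℝ) ⊤ →L[ℝ] StrongDual ℝ F),
      (∀ x : E, T x = R (S x)) ∧ ‖R‖ * ‖S‖ ≤ (Kf : ℝ) * (Kg : ℝ) := by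
  let ι := toLpInftyDualBall E
  obtain ⟨f', hf', hf'ι⟩ := hf.extend_lp_infty_of_isometry ι.isometry
  obtain ⟨R, hRι, hR⟩ := exists_continuousLinearMap_eq_of_lipschitzWith (ι : E →+ _) (T : E →+ _)
    (hg.comp hf') fun x => by simp [hT, ← hf'ι]
  refine ⟨ι.toContinuousLinearMap, R, fun x => (hRι x).symm, ?_⟩
  calc ‖R‖ * ‖ι.toContinuousLinearMap‖ ≤ (Kg * Kf : ℝ≥0) * 1 :=
        mul_le_mul hR ι.norm_toContinuousLinearMap_le (norm_nonneg _) (NNReal.coe_nonneg _)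
    _ = Kf * Kg := by push_cast; ring

/-- A linear operator into a dual space admitting a Lipschitz factorization through
ℓ∞(B_{E'}) admits a linear factorization through ℓ∞(B_{E'}) with controlled norms. -/
theorem stmt10 {E F : Type*} [NormedAddCommGroup E] [NormedSpace ℝ E] [CompleteSpace E]
    [NormedAddCommGroup F] [NormedSpace ℝ F] [CompleteSpace F]
    (T : E →L[ℝ] StrongDual ℝ F)
    (f : E → lp (fun _ : (Metric.closedBall (0 : StrongDual ℝ E) 1) => ℝ) ⊤)
    (g : lp (fun _ : (Metric.closedBall (0 : StrongDual ℝ E) 1) => ℝ) ⊤ → StrongDual ℝ F)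
    (Kf Kg : NNReal) (hf : LipschitzWith Kf f) (hg : LipschitzWith Kg g)
    (hf0 : f 0 = 0) (hg0 : g 0 = 0) (hT : ∀ x : E, T x = g (f x)) :
    ∃ (S : E →L[ℝ] lp (fun _ : (Metric.closedBall (0 : StrongDual ℝ E) 1) => ℝ) ⊤)
      (R : lp (fun _ : (Metric.closedBall (0 : StrongDual ℝ E) 1) => ℝ) ⊤ →L[ℝ] StrongDual ℝ F),
      (∀ x : E, T x = R (S x)) ∧ ‖R‖ * ‖S‖ ≤ (Kf : ℝ) * (Kg : ℝ) :=
  stmt10_general T f g Kf Kg hf hg hT
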